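/- Suppose each set A_{n,j} of the cover of A_{ε_n} is contained in a Hellinger ball of radius δ_n < ε_n centered at some f_j ∈ A_{n,j}, and set γ_n = ε_n − δ_n. Then for any η_n > 0, F₀^∞( Σ_{j≥1} L^{(n)}_{n,j} > exp(−n η_n) ) ≤ exp( −n( −log(1 − γ_n²/2) − η_n ) ) · K_{ε_n}. -/

import Mathlib

/-!
By Markov's inequality it suffices to show `E[L_{n,j}] ≤ (1 - γ²/2)ⁿ Π(A_{n,j})^{1/2}` for each `j`.
Integrating out one observation `y ~ f₀` while the others are held fixed, the square root of the
integrated likelihood ratio contributes `∫ √(p f₀) dλ`, where `p` is a mixture (weighted by the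
likelihood of the other observations) of densities in `A_{n,j}`. The Hellinger affinity is
concave, so such a mixture stays in the `δ`-ball around `f_j`; by the triangle inequality it is
then at distance at least `ε - δ = γ` from `f₀`, i.e. its affinity with `f₀` is at most
`1 - γ²/2`. Iterating over the `n` observations gives the power.
-/

open MeasureTheory ProbabilityTheory Filter
open scoped ENNReal

noncomputable def hellinger {X : Type*} [MeasurableSpace X] (lam : Measure X)
    (f g : X → ℝ) : ℝ :=
  Real.sqrt (∫ x, (Real.sqrt (f x) - Real.sqrt (g x)) ^ 2 ∂lam)

lemma ofReal_sqrt_mul {a b : ℝ} (ha : 0 ≤ a) :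
    ENNReal.ofReal √(a * b) = (ENNReal.ofReal a * ENNReal.ofReal b) ^ (1 / 2 : ℝ) := by
  rcases le_total 0 b with hb | hb
  · rw [← ENNReal.ofReal_mul ha, Real.sqrt_eq_rpow,
      ENNReal.ofReal_rpow_of_nonneg (mul_nonneg ha hb) (by norm_num)]
  · simp [ENNReal.ofReal_of_nonpos hb,
      Real.sqrt_eq_zero_of_nonpos (mul_nonpos_of_nonneg_of_nonpos ha hb)]

lemma lintegral_rpow_half_le {α : Type*} [MeasurableSpace α] {μ : Measure α}
    [IsProbabilityMeasure μ] {h : α → ℝ≥0∞} (hh : AEMeasurable h μ) :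
    ∫⁻ a, h a ^ (1 / 2 : ℝ) ∂μ ≤ (∫⁻ a, h a ∂μ) ^ (1 / 2 : ℝ) := by
  have := ENNReal.lintegral_mul_le_Lp_mul_Lq μ .two_two (hh.pow_const (1 / 2 : ℝ))
    aemeasurable_const (g := 1)
  have hsq : ∀ a, (h a ^ (1 / 2 : ℝ)) ^ (2 : ℝ) = h a := fun a => by
    rw [← ENNReal.rpow_mul]; norm_num
  simpa only [hsq, Pi.one_apply, ENNReal.one_rpow, mul_one, lintegral_const, measure_univ,
    one_div_one, ENNReal.rpow_one] using this

lemma ofReal_div_mul_le (a : ℝ) {b : ℝ} (hb : 0 ≤ b) :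
    ENNReal.ofReal (a / b) * ENNReal.ofReal b ≤ ENNReal.ofReal a := by
  rw [← ENNReal.ofReal_mul' hb]
  rcases eq_or_ne b 0 with rfl | hb0
  · simp
  · rw [div_mul_cancel₀ a hb0]

lemma ofReal_pow_div_ofReal_exp {b : ℝ} (hb : 0 < b) (n : ℕ) (η : ℝ) :
    ENNReal.ofReal b ^ n / ENNReal.ofReal (Real.exp (-n * η))
      = ENNReal.ofReal (Real.exp (-n * (-Real.log b - η))) := by
  rw [← ENNReal.ofReal_pow hb.le, ← ENNReal.ofReal_div_of_pos (Real.exp_pos _),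
    show -(n : ℝ) * (-Real.log b - η) = n * Real.log b - -n * η by ring,
    Real.exp_sub, Real.exp_nat_mul, Real.exp_log hb]

lemma measure_lt_tsum_le_tsum_div {Ω : Type*} [MeasurableSpace Ω] {ν : Measure Ω}
    {L : ℕ → Ω → ℝ≥0∞} (hL : ∀ j, Measurable (L j)) {B : ℕ → ℝ≥0∞}
    (hB : ∀ j, ∫⁻ ω, L j ω ∂ν ≤ B j) {c : ℝ≥0∞} (hc0 : c ≠ 0) (hc : c ≠ ∞) :
    ν {ω | c < ∑' j, L j ω} ≤ (∑' j, B j) / c :=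
  calc ν {ω | c < ∑' j, L j ω} ≤ ν {ω | c ≤ ∑' j, L j ω} := measure_mono fun _ (h : c < _) => h.le
    _ ≤ (∫⁻ ω, ∑' j, L j ω ∂ν) / c :=
        meas_ge_le_lintegral_div (Measurable.tsum hL).aemeasurable hc0 hc
    _ = (∑' j, ∫⁻ ω, L j ω ∂ν) / c := by rw [lintegral_tsum fun j => (hL j).aemeasurable]
    _ ≤ (∑' j, B j) / c := by gcongr with j; exact hB j

section

variable {X : Type*} [MeasurableSpace X] {lam : Measure X}

structure IsProbDensity (lam : Measure X) (f : X → ℝ) : Prop where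
  measurable : Measurable f
  nonneg : ∀ x, 0 ≤ f x
  integral_eq_one : ∫ x, f x ∂lam = 1

namespace IsProbDensity

variable {f : X → ℝ}

lemma integrable (hf : IsProbDensity lam f) : Integrable f lam :=
  .of_integral_ne_zero (by simp [hf.integral_eq_one])

lemma lintegral_ofReal (hf : IsProbDensity lam f) : ∫⁻ x, ENNReal.ofReal (f x) ∂lam = 1 := by
  rw [← ofReal_integral_eq_lintegral_ofReal hf.integrable (.of_forall hf.nonneg),
    hf.integral_eq_one, ENNReal.ofReal_one]

lemma isProbabilityMeasure_withDensity (hf : IsProbDensity lam f) :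
    IsProbabilityMeasure (lam.withDensity fun x => ENNReal.ofReal (f x)) :=
  ⟨by rw [withDensity_apply _ .univ, setLIntegral_univ, hf.lintegral_ofReal]⟩

end IsProbDensity

noncomputable def hellingerAffinity (lam : Measure X) (f g : X → ℝ) : ℝ :=
  ∫ x, √(f x * g x) ∂lam

section Hellinger

variable {f g k : X → ℝ}

lemma sq_sqrt_sub_sqrt {a b : ℝ} (ha : 0 ≤ a) (hb : 0 ≤ b) :
    (√a - √b) ^ 2 = a + b - 2 * √(a * b) := by
  rw [sub_sq, Real.sq_sqrt ha, Real.sq_sqrt hb, Real.sqrt_mul ha]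
  ring

lemma integrable_sqrt_mul (hf : IsProbDensity lam f) (hg : IsProbDensity lam g) :
    Integrable (fun x => √(f x * g x)) lam := by
  refine ((hf.integrable.add hg.integrable).div_const 2).mono'
    (hf.measurable.mul hg.measurable).sqrt.aestronglyMeasurable (.of_forall fun x => ?_)
  rw [Real.norm_of_nonneg (Real.sqrt_nonneg _), Pi.add_apply]
  linarith [sq_sqrt_sub_sqrt (hf.nonneg x) (hg.nonneg x), sq_nonneg (√(f x) - √(g x))]

lemma integrable_sq_sqrt_sub_sqrt (hf : IsProbDensity lam f) (hg : IsProbDensity lam g) :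
    Integrable (fun x => (√(f x) - √(g x)) ^ 2) lam := by
  simp_rw [sq_sqrt_sub_sqrt (hf.nonneg _) (hg.nonneg _)]
  exact (hf.integrable.add hg.integrable).sub ((integrable_sqrt_mul hf hg).const_mul 2)

lemma hellingerAffinity_nonneg : 0 ≤ hellingerAffinity lam f g :=
  integral_nonneg fun _ => Real.sqrt_nonneg _

lemma hellinger_nonneg : 0 ≤ hellinger lam f g := Real.sqrt_nonneg _

lemma hellinger_self : hellinger lam f f = 0 := by simp [hellinger]

lemma hellinger_comm : hellinger lam f g = hellinger lam g f := by
  simp_rw [hellinger, ← neg_sub (√(g _)), neg_sq]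

lemma hellingerAffinity_eq (hf : IsProbDensity lam f) (hg : IsProbDensity lam g) :
    hellingerAffinity lam f g = 1 - hellinger lam f g ^ 2 / 2 := by
  rw [hellinger, Real.sq_sqrt (integral_nonneg fun _ => sq_nonneg _)]
  simp_rw [sq_sqrt_sub_sqrt (hf.nonneg _) (hg.nonneg _)]
  rw [integral_sub (f := fun x => f x + g x) (hf.integrable.add hg.integrable)
    ((integrable_sqrt_mul hf hg).const_mul 2),
    integral_add hf.integrable hg.integrable, integral_const_mul, hf.integral_eq_one,
    hg.integral_eq_one, hellingerAffinity]
  ring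

lemma hellinger_sq_le_two (hf : IsProbDensity lam f) (hg : IsProbDensity lam g) :
    hellinger lam f g ^ 2 ≤ 2 := by
  linarith [hellingerAffinity_eq hf hg, hellingerAffinity_nonneg (lam := lam) (f := f) (g := g)]

lemma ofReal_hellinger (hf : IsProbDensity lam f) (hg : IsProbDensity lam g) :
    ENNReal.ofReal (hellinger lam f g) = eLpNorm (fun x => √(f x) - √(g x)) 2 lam := by
  have hmeas : AEStronglyMeasurable (fun x => √(f x) - √(g x)) lam :=
    (hf.measurable.sqrt.sub hg.measurable.sqrt).aestronglyMeasurable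
  rw [((memLp_two_iff_integrable_sq hmeas).2 (integrable_sq_sqrt_sub_sqrt hf hg)
    ).eLpNorm_eq_integral_rpow_norm two_ne_zero ENNReal.ofNat_ne_top, hellinger,
    Real.sqrt_eq_rpow]
  norm_num

lemma hellinger_triangle (hf : IsProbDensity lam f) (hg : IsProbDensity lam g)
    (hk : IsProbDensity lam k) : hellinger lam f k ≤ hellinger lam f g + hellinger lam g k := by
  rw [← ENNReal.ofReal_le_ofReal_iff (add_nonneg hellinger_nonneg hellinger_nonneg),
    ENNReal.ofReal_add hellinger_nonneg hellinger_nonneg, ofReal_hellinger hf hk,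
    ofReal_hellinger hf hg, ofReal_hellinger hg hk]
  calc eLpNorm (fun x => √(f x) - √(k x)) 2 lam
      = eLpNorm ((fun x => √(f x) - √(g x)) + fun x => √(g x) - √(k x)) 2 lam := by
        congr 1
        ext x
        simp
    _ ≤ _ := eLpNorm_add_le (hf.measurable.sqrt.sub hg.measurable.sqrt).aestronglyMeasurable
        (hg.measurable.sqrt.sub hk.measurable.sqrt).aestronglyMeasurable one_le_two

lemma sq_lt_two_of_lt_hellinger (hf : IsProbDensity lam f)
    (hg : IsProbDensity lam g) {γ : ℝ} (hγ : 0 ≤ γ) (h : γ < hellinger lam f g) : γ ^ 2 < 2 :=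
  (pow_lt_pow_left₀ h hγ two_ne_zero).trans_le (hellinger_sq_le_two hf hg)

lemma ofReal_hellingerAffinity (hf : IsProbDensity lam f) (hg : IsProbDensity lam g) :
    ENNReal.ofReal (hellingerAffinity lam f g)
      = ∫⁻ y, (ENNReal.ofReal (f y) * ENNReal.ofReal (g y)) ^ (1 / 2 : ℝ) ∂lam := by
  rw [hellingerAffinity, ofReal_integral_eq_lintegral_ofReal (integrable_sqrt_mul hf hg)
    (.of_forall fun _ => Real.sqrt_nonneg _)]
  simp_rw [ofReal_sqrt_mul (hf.nonneg _)]

end Hellinger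

section Mixture

variable {F : Type*} [MeasurableSpace F] {ev : F → X → ℝ} {Q : Measure F}

noncomputable def mixture (Q : Measure F) (ev : F → X → ℝ) (y : X) : ℝ≥0∞ :=
  ∫⁻ f, ENNReal.ofReal (ev f y) ∂Q

lemma measurable_mixture [SFinite Q] (hev : Measurable (Function.uncurry ev)) :
    Measurable (mixture Q ev) :=
  Measurable.lintegral_prod_right (f := fun y f => ENNReal.ofReal (ev f y))
    (hev.comp measurable_swap).ennreal_ofReal

lemma lintegral_mixture [SFinite lam] [SFinite Q] (hev : Measurable (Function.uncurry ev))
    (hdens : ∀ f, IsProbDensity lam (ev f)) : ∫⁻ y, mixture Q ev y ∂lam = Q Set.univ := by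
  unfold mixture
  rw [lintegral_lintegral_swap (hev.comp measurable_swap).ennreal_ofReal.aemeasurable]
  simp [(hdens _).lintegral_ofReal]

lemma lintegral_sqrt_lintegral_ofReal_div_le [SFinite Q] (hev : Measurable (Function.uncurry ev))
    {f₀ : X → ℝ} (hf₀ : IsProbDensity lam f₀) :
    ∫⁻ y, (∫⁻ f, ENNReal.ofReal (ev f y / f₀ y) ∂Q) ^ (1 / 2 : ℝ)
        ∂lam.withDensity (fun y => ENNReal.ofReal (f₀ y))
      ≤ ∫⁻ y, (mixture Q ev y * ENNReal.ofReal (f₀ y)) ^ (1 / 2 : ℝ) ∂lam := by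
  have hf₀m := hf₀.measurable
  rw [lintegral_withDensity_eq_lintegral_mul _ hf₀.measurable.ennreal_ofReal
    (Measurable.pow_const (Measurable.lintegral_prod_right
      (f := fun y f => ENNReal.ofReal (ev f y / f₀ y)) (by fun_prop)) _)]
  -- only `≤`, because `ev f y / f₀ y` is the junk value `0` where `f₀ y = 0`
  refine lintegral_mono fun y => ?_
  set R := ∫⁻ f, ENNReal.ofReal (ev f y / f₀ y) ∂Q
  set a := ENNReal.ofReal (f₀ y)
  have hratio : R * a ≤ mixture Q ev y := by
    rw [← lintegral_mul_const' _ _ ENNReal.ofReal_ne_top]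
    exact lintegral_mono fun f => ofReal_div_mul_le _ (hf₀.nonneg y)
  have hsq : (a * a) ^ (1 / 2 : ℝ) = a := by
    rw [← sq, ← ENNReal.rpow_natCast, ← ENNReal.rpow_mul]
    norm_num
  calc a * R ^ (1 / 2 : ℝ) = (R * a * a) ^ (1 / 2 : ℝ) := by
        rw [mul_assoc, ENNReal.mul_rpow_of_nonneg _ _ (by norm_num), hsq, mul_comm]
    _ ≤ (mixture Q ev y * a) ^ (1 / 2 : ℝ) := by gcongr

variable [SFinite lam] (hev : Measurable (Function.uncurry ev))
  (hdens : ∀ f, IsProbDensity lam (ev f))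
include hev hdens

section Probability

variable [IsProbabilityMeasure Q]

lemma ae_mixture_lt_top : ∀ᵐ y ∂lam, mixture Q ev y < ∞ :=
  ae_lt_top (measurable_mixture hev) (by simp [lintegral_mixture hev hdens])

lemma isProbDensity_toReal_mixture : IsProbDensity lam fun y => (mixture Q ev y).toReal where
  measurable := (measurable_mixture hev).ennreal_toReal
  nonneg _ := ENNReal.toReal_nonneg
  integral_eq_one := by
    rw [integral_toReal (measurable_mixture hev).aemeasurable
      (ae_mixture_lt_top (Q := Q) hev hdens), lintegral_mixture hev hdens, measure_univ,
      ENNReal.toReal_one]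

lemma lintegral_sqrt_mixture_mul {g : X → ℝ} (hg : IsProbDensity lam g) :
    ∫⁻ y, (mixture Q ev y * ENNReal.ofReal (g y)) ^ (1 / 2 : ℝ) ∂lam
      = ENNReal.ofReal (hellingerAffinity lam (fun y => (mixture Q ev y).toReal) g) := by
  rw [ofReal_hellingerAffinity (isProbDensity_toReal_mixture hev hdens) hg]
  refine lintegral_congr_ae ((ae_mixture_lt_top (Q := Q) hev hdens).mono fun y hy => ?_)
  simp only [ENNReal.ofReal_toReal hy.ne]

-- concavity of the affinity: Jensen's inequality for `√` under `Q`, at each point `y`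
lemma lintegral_hellingerAffinity_le {g : X → ℝ} (hg : IsProbDensity lam g) :
    ∫⁻ f, ENNReal.ofReal (hellingerAffinity lam (ev f) g) ∂Q
      ≤ ENNReal.ofReal (hellingerAffinity lam (fun y => (mixture Q ev y).toReal) g) := by
  rw [← lintegral_sqrt_mixture_mul hev hdens hg]
  simp_rw [ofReal_hellingerAffinity (hdens _) hg]
  have hmeas : Measurable fun p : F × X => ENNReal.ofReal (ev p.1 p.2) := hev.ennreal_ofReal
  rw [lintegral_lintegral_swap
    ((hmeas.mul (hg.measurable.comp measurable_snd).ennreal_ofReal).pow_const _).aemeasurable]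
  refine lintegral_mono fun y => ?_
  simp_rw [ENNReal.mul_rpow_of_nonneg _ _ (by norm_num : (0 : ℝ) ≤ 1 / 2)]
  rw [lintegral_mul_const' _ _ (by simp)]
  gcongr
  exact lintegral_rpow_half_le
    (hev.comp (measurable_id.prodMk measurable_const)).ennreal_ofReal.aemeasurable

lemma hellinger_mixture_le {g : X → ℝ} (hg : IsProbDensity lam g) {δ : ℝ}
    (hball : ∀ᵐ f ∂Q, hellinger lam (ev f) g ≤ δ) :
    hellinger lam (fun y => (mixture Q ev y).toReal) g ≤ δ := by
  have hq := isProbDensity_toReal_mixture (Q := Q) hev hdens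
  obtain ⟨f, hf⟩ := hball.exists
  have hδ : 0 ≤ δ := hellinger_nonneg.trans hf
  have haff : ENNReal.ofReal (1 - δ ^ 2 / 2)
      ≤ ENNReal.ofReal (hellingerAffinity lam (fun y => (mixture Q ev y).toReal) g) :=
    calc ENNReal.ofReal (1 - δ ^ 2 / 2) = ∫⁻ _, ENNReal.ofReal (1 - δ ^ 2 / 2) ∂Q := by simp
      _ ≤ ∫⁻ f, ENNReal.ofReal (hellingerAffinity lam (ev f) g) ∂Q := by
        refine lintegral_mono_ae (hball.mono fun f hf => ENNReal.ofReal_le_ofReal ?_)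
        rw [hellingerAffinity_eq (hdens f) hg]
        nlinarith [hellinger_nonneg (lam := lam) (f := ev f) (g := g)]
      _ ≤ _ := lintegral_hellingerAffinity_le hev hdens hg
  rw [ENNReal.ofReal_le_ofReal_iff hellingerAffinity_nonneg, hellingerAffinity_eq hq hg] at haff
  exact (pow_le_pow_iff_left₀ hellinger_nonneg hδ two_ne_zero).1 (by linarith)

lemma lintegral_sqrt_mixture_mul_le {f₀ f₁ : X → ℝ} (hf₀ : IsProbDensity lam f₀)
    (hf₁ : IsProbDensity lam f₁) {ε δ : ℝ} (hδε : δ ≤ ε) (hε : ε ≤ hellinger lam f₁ f₀)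
    (hball : ∀ᵐ f ∂Q, hellinger lam (ev f) f₁ ≤ δ) :
    ∫⁻ y, (mixture Q ev y * ENNReal.ofReal (f₀ y)) ^ (1 / 2 : ℝ) ∂lam
      ≤ ENNReal.ofReal (1 - (ε - δ) ^ 2 / 2) := by
  have hq := isProbDensity_toReal_mixture (Q := Q) hev hdens
  have hfar : ε - δ ≤ hellinger lam (fun y => (mixture Q ev y).toReal) f₀ := by
    linarith [hellinger_triangle hf₁ hq hf₀, hellinger_comm (lam := lam) (f := f₁)
      (g := fun y => (mixture Q ev y).toReal), hellinger_mixture_le hev hdens hf₁ hball]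
  rw [lintegral_sqrt_mixture_mul hev hdens hf₀, hellingerAffinity_eq hq hf₀]
  gcongr

end Probability

lemma lintegral_sqrt_mixture_mul_le_mul {f₀ f₁ : X → ℝ} (hf₀ : IsProbDensity lam f₀)
    (hf₁ : IsProbDensity lam f₁) {ε δ : ℝ} (hδ : 0 ≤ δ) (hδε : δ ≤ ε)
    (hε : ε < hellinger lam f₁ f₀) (hball : ∀ᵐ f ∂Q, hellinger lam (ev f) f₁ ≤ δ) :
    ∫⁻ y, (mixture Q ev y * ENNReal.ofReal (f₀ y)) ^ (1 / 2 : ℝ) ∂lam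
      ≤ ENNReal.ofReal (1 - (ε - δ) ^ 2 / 2) * Q Set.univ ^ (1 / 2 : ℝ) := by
  set c := Q Set.univ
  rcases eq_or_ne c 0 with h0 | h0
  · simp [Measure.measure_univ_eq_zero.1 h0, mixture]
  rcases eq_or_ne c ∞ with htop | htop
  · have hβ : 0 < 1 - (ε - δ) ^ 2 / 2 := by
      linarith [sq_lt_two_of_lt_hellinger hf₁ hf₀ (sub_nonneg.2 hδε)
        ((sub_le_self _ hδ).trans_lt hε)]
    rw [htop, ENNReal.top_rpow_of_pos (by norm_num), ENNReal.mul_top (by simpa using hβ)]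
    exact le_top
  have : IsProbabilityMeasure (c⁻¹ • Q) := ⟨by simp [c, ENNReal.inv_mul_cancel h0 htop]⟩
  have hmix (y : X) : mixture Q ev y = c * mixture (c⁻¹ • Q) ev y := by
    rw [mixture, mixture, lintegral_smul_measure, smul_eq_mul, ← mul_assoc,
      ENNReal.mul_inv_cancel h0 htop, one_mul]
  calc ∫⁻ y, (mixture Q ev y * ENNReal.ofReal (f₀ y)) ^ (1 / 2 : ℝ) ∂lam
      = c ^ (1 / 2 : ℝ)
          * ∫⁻ y, (mixture (c⁻¹ • Q) ev y * ENNReal.ofReal (f₀ y)) ^ (1 / 2 : ℝ) ∂lam := by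
        rw [← lintegral_const_mul' _ _ (by simp [htop])]
        simp_rw [hmix, mul_assoc, ENNReal.mul_rpow_of_nonneg _ _ (by norm_num : (0 : ℝ) ≤ 1 / 2)]
    _ ≤ c ^ (1 / 2 : ℝ) * ENNReal.ofReal (1 - (ε - δ) ^ 2 / 2) := by
        gcongr
        exact lintegral_sqrt_mixture_mul_le hev hdens hf₀ hf₁ hδε hε.le
          (Measure.ae_smul_measure hball _)
    _ = _ := mul_comm _ _

end Mixture

theorem lintegral_sqrt_lintegral_prod_le_pow {α : Type*} [MeasurableSpace α] {μ : Measure X}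
    [SigmaFinite μ] {Q : Measure α} [SFinite Q] {r : α → X → ℝ≥0∞}
    (hr : Measurable (Function.uncurry r)) {β : ℝ≥0∞}
    -- `w` will be the likelihood of the other observations
    (hstep : ∀ w : α → ℝ≥0∞, Measurable w →
      ∫⁻ y, (∫⁻ a, w a * r a y ∂Q) ^ (1 / 2 : ℝ) ∂μ ≤ β * (∫⁻ a, w a ∂Q) ^ (1 / 2 : ℝ))
    (n : ℕ) :
    ∫⁻ x : Fin n → X, (∫⁻ a, ∏ i, r a (x i) ∂Q) ^ (1 / 2 : ℝ) ∂(Measure.pi fun _ => μ)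
      ≤ β ^ n * Q Set.univ ^ (1 / 2 : ℝ) := by
  induction n with
  | zero => simp
  | succ n ih =>
    have hsplit := measurePreserving_piFinSuccAbove (fun _ : Fin (n + 1) => μ) (Fin.last n)
    calc ∫⁻ x : Fin (n + 1) → X, (∫⁻ a, ∏ i, r a (x i) ∂Q) ^ (1 / 2 : ℝ)
          ∂(Measure.pi fun _ => μ)
        = ∫⁻ p : X × (Fin n → X), (∫⁻ a, (∏ i, r a (p.2 i)) * r a p.1 ∂Q) ^ (1 / 2 : ℝ)
            ∂μ.prod (Measure.pi fun _ => μ) := by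
          rw [← hsplit.lintegral_comp_emb (MeasurableEquiv.measurableEmbedding _)]
          simp [Fin.prod_univ_castSucc, Fin.init]
      _ = ∫⁻ x : Fin n → X, ∫⁻ y, (∫⁻ a, (∏ i, r a (x i)) * r a y ∂Q) ^ (1 / 2 : ℝ) ∂μ
            ∂(Measure.pi fun _ => μ) :=
          lintegral_prod_symm _ (Measurable.pow_const (Measurable.lintegral_prod_right'
            (f := fun q : (X × (Fin n → X)) × α => (∏ i, r q.2 (q.1.2 i)) * r q.2 q.1.1)
            (by fun_prop)) _).aemeasurable
      _ ≤ ∫⁻ x : Fin n → X, β * (∫⁻ a, ∏ i, r a (x i) ∂Q) ^ (1 / 2 : ℝ)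
            ∂(Measure.pi fun _ => μ) :=
          lintegral_mono fun x => hstep _ (by fun_prop)
      _ ≤ β * (β ^ n * Q Set.univ ^ (1 / 2 : ℝ)) := by
          rw [lintegral_const_mul _ (Measurable.pow_const (Measurable.lintegral_prod_right
            (f := fun (x : Fin n → X) a => ∏ i, r a (x i)) (by fun_prop)) _)]
          gcongr
      _ = β ^ (n + 1) * Q Set.univ ^ (1 / 2 : ℝ) := by ring

theorem lintegral_sqrt_lintegral_likelihoodRatio_le [SFinite lam] {F : Type*}
    [MeasurableSpace F] {ev : F → X → ℝ} (hev : Measurable (Function.uncurry ev))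
    (hdens : ∀ f, IsProbDensity lam (ev f)) {f₀ f₁ : X → ℝ} (hf₀ : IsProbDensity lam f₀)
    (hf₁ : IsProbDensity lam f₁) {Ω : Type*} [MeasurableSpace Ω] {ν : Measure Ω}
    {Xs : ℕ → Ω → X} (hXmeas : ∀ i, Measurable (Xs i)) (hindep : iIndepFun Xs ν)
    (hlaw : ∀ i, ν.map (Xs i) = lam.withDensity fun x => ENNReal.ofReal (f₀ x))
    {ε δ : ℝ} (hδ : 0 ≤ δ) (hδε : δ ≤ ε) (hε : ε < hellinger lam f₁ f₀)
    {Q : Measure F} [SFinite Q] (hball : ∀ᵐ f ∂Q, hellinger lam (ev f) f₁ ≤ δ) (n : ℕ) :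
    ∫⁻ ω, (∫⁻ f, ENNReal.ofReal (∏ i ∈ Finset.range n, ev f (Xs i ω) / f₀ (Xs i ω)) ∂Q)
        ^ (1 / 2 : ℝ) ∂ν
      ≤ ENNReal.ofReal (1 - (ε - δ) ^ 2 / 2) ^ n * Q Set.univ ^ (1 / 2 : ℝ) := by
  have := hf₀.isProbabilityMeasure_withDensity
  have hf₀m := hf₀.measurable
  have hpi : ν.map (fun ω (i : Fin n) => Xs i ω)
      = Measure.pi fun _ => lam.withDensity fun x => ENNReal.ofReal (f₀ x) := by
    rw [(hindep.precomp Fin.val_injective).map_fun_eq_pi_map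
      fun i : Fin n => (hXmeas i).aemeasurable]
    simp [hlaw]
  have hstep (w : F → ℝ≥0∞) (hw : Measurable w) :
      ∫⁻ y, (∫⁻ f, w f * ENNReal.ofReal (ev f y / f₀ y) ∂Q) ^ (1 / 2 : ℝ)
          ∂lam.withDensity (fun x => ENNReal.ofReal (f₀ x))
        ≤ ENNReal.ofReal (1 - (ε - δ) ^ 2 / 2) * (∫⁻ f, w f ∂Q) ^ (1 / 2 : ℝ) := by
    have hQw (y : X) : ∫⁻ f, w f * ENNReal.ofReal (ev f y / f₀ y) ∂Q
        = ∫⁻ f, ENNReal.ofReal (ev f y / f₀ y) ∂Q.withDensity w :=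
      (lintegral_withDensity_eq_lintegral_mul Q hw (by fun_prop)).symm
    simp_rw [hQw]
    rw [← setLIntegral_univ (f := w), ← withDensity_apply _ .univ]
    exact (lintegral_sqrt_lintegral_ofReal_div_le hev hf₀).trans
      (lintegral_sqrt_mixture_mul_le_mul hev hdens hf₀ hf₁ hδ hδε hε
        ((withDensity_absolutelyContinuous Q w).ae_le hball))
  calc ∫⁻ ω, (∫⁻ f, ENNReal.ofReal (∏ i ∈ Finset.range n, ev f (Xs i ω) / f₀ (Xs i ω)) ∂Q)
        ^ (1 / 2 : ℝ) ∂ν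
      = ∫⁻ x : Fin n → X, (∫⁻ f, ∏ i, ENNReal.ofReal (ev f (x i) / f₀ (x i)) ∂Q) ^ (1 / 2 : ℝ)
          ∂ν.map (fun ω (i : Fin n) => Xs i ω) := by
        rw [lintegral_map (Measurable.pow_const (Measurable.lintegral_prod_right
          (f := fun (x : Fin n → X) f => ∏ i, ENNReal.ofReal (ev f (x i) / f₀ (x i)))
          (by fun_prop)) _) (measurable_pi_lambda _ fun i => hXmeas i)]
        refine lintegral_congr fun ω => congrArg (· ^ (1 / 2 : ℝ)) (lintegral_congr fun f => ?_)
        rw [← Fin.prod_univ_eq_prod_range (fun i => ev f (Xs i ω) / f₀ (Xs i ω)),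
          ENNReal.ofReal_prod_of_nonneg fun _ _ => div_nonneg ((hdens f).nonneg _) (hf₀.nonneg _)]
    _ ≤ _ := by
        rw [hpi]
        exact lintegral_sqrt_lintegral_prod_le_pow (by fun_prop) hstep n

end

theorem stmt6_general {X : Type*} [MeasurableSpace X] (lam : Measure X) [SigmaFinite lam]
    {F : Type*} [MeasurableSpace F] (ev : F → X → ℝ)
    (hev : Measurable (Function.uncurry ev))
    (hdens : ∀ f, (∀ x, 0 ≤ ev f x) ∧ ∫ x, ev f x ∂lam = 1)
    (Pr : Measure F) [IsProbabilityMeasure Pr]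
    (f₀ : X → ℝ) (hf₀ : Measurable f₀ ∧ (∀ x, 0 ≤ f₀ x) ∧ ∫ x, f₀ x ∂lam = 1)
    {Ω : Type*} [MeasurableSpace Ω] (ν : Measure Ω)
    (Xs : ℕ → Ω → X) (hXmeas : ∀ i, Measurable (Xs i))
    (hindep : iIndepFun Xs ν)
    (hlaw : ∀ i, Measure.map (Xs i) ν = lam.withDensity (fun x => ENNReal.ofReal (f₀ x)))
    (n : ℕ) (εn δn ηn : ℝ) (hδε : δn < εn)
    (A : ℕ → Set F) (hAmeas : ∀ j, MeasurableSet (A j))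
    (hAsub : ∀ j, A j ⊆ {f | εn < hellinger lam (ev f) f₀})
    (hAball : ∀ j, ∃ fc ∈ A j, ∀ f ∈ A j, hellinger lam (ev f) (ev fc) ≤ δn) :
    ν {ω | ENNReal.ofReal (Real.exp (-(n : ℝ) * ηn)) <
        ∑' j : ℕ, (∫⁻ f in A j,
          ENNReal.ofReal (∏ i ∈ Finset.range n, ev f (Xs i ω) / f₀ (Xs i ω)) ∂Pr)
            ^ ((1 : ℝ)/2)}
      ≤ ENNReal.ofReal
          (Real.exp (-(n : ℝ) * (-Real.log (1 - (εn - δn) ^ 2 / 2) - ηn))) *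
        ∑' j : ℕ, (Pr (A j)) ^ ((1 : ℝ)/2) := by
  have hf₀d : IsProbDensity lam f₀ := ⟨hf₀.1, hf₀.2.1, hf₀.2.2⟩
  have hf₀m := hf₀.1
  have hdens' (f : F) : IsProbDensity lam (ev f) := ⟨by fun_prop, (hdens f).1, (hdens f).2⟩
  choose fc hfcA hfcball using hAball
  have hδ : 0 ≤ δn := by simpa only [hellinger_self] using hfcball 0 (fc 0) (hfcA 0)
  have hβ : 0 < 1 - (εn - δn) ^ 2 / 2 := by
    linarith [sq_lt_two_of_lt_hellinger (hdens' (fc 0)) hf₀d (sub_nonneg.2 hδε.le)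
      ((sub_le_self _ hδ).trans_lt (hAsub 0 (hfcA 0)))]
  refine (measure_lt_tsum_le_tsum_div (fun j => ?_)
    (B := fun j => ENNReal.ofReal (1 - (εn - δn) ^ 2 / 2) ^ n * Pr (A j) ^ ((1 : ℝ) / 2))
    (fun j => ?_) (by simp [Real.exp_pos]) ENNReal.ofReal_ne_top).trans_eq ?_
  · exact (Measurable.lintegral_prod_right (f := fun ω f =>
      ENNReal.ofReal (∏ i ∈ Finset.range n, ev f (Xs i ω) / f₀ (Xs i ω))) (by fun_prop)).pow_const _
  · simpa only [Measure.restrict_apply_univ] using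
      lintegral_sqrt_lintegral_likelihoodRatio_le hev hdens' hf₀d (hdens' (fc j)) hXmeas hindep
        hlaw hδ hδε.le (hAsub j (hfcA j))
        (ae_restrict_of_forall_mem (μ := Pr) (hAmeas j) (hfcball j)) n
  rw [ENNReal.tsum_mul_left, div_eq_mul_inv, mul_right_comm, ← div_eq_mul_inv,
    ofReal_pow_div_ofReal_exp hβ]

/-- If each set `A j` of a cover of `A_{ε_n} = {f : h(f,f₀) > ε_n}` is contained in a
Hellinger ball of radius `δ_n < ε_n` centered at some `f_j ∈ A j`, and `γ_n = ε_n − δ_n`,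
then for any `η_n > 0`,
`F₀^∞(Σ_j L^{(n)}_{n,j} > exp(−n η_n)) ≤ exp(−n(−log(1−γ_n²/2) − η_n)) · K_{ε_n}`. -/
theorem stmt6 {X : Type*} [MeasurableSpace X] [TopologicalSpace X] [PolishSpace X]
    [BorelSpace X] (lam : Measure X) [SigmaFinite lam]
    {F : Type*} [MeasurableSpace F] (ev : F → X → ℝ)
    (hev : Measurable (Function.uncurry ev))
    (hdens : ∀ f, (∀ x, 0 ≤ ev f x) ∧ ∫ x, ev f x ∂lam = 1)
    (Pr : Measure F) [IsProbabilityMeasure Pr]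
    (f₀ : X → ℝ) (hf₀ : Measurable f₀ ∧ (∀ x, 0 ≤ f₀ x) ∧ ∫ x, f₀ x ∂lam = 1)
    {Ω : Type*} [MeasurableSpace Ω] (ν : Measure Ω) [IsProbabilityMeasure ν]
    (Xs : ℕ → Ω → X) (hXmeas : ∀ i, Measurable (Xs i))
    (hindep : iIndepFun Xs ν)
    (hlaw : ∀ i, Measure.map (Xs i) ν = lam.withDensity (fun x => ENNReal.ofReal (f₀ x)))
    (n : ℕ) (εn δn ηn : ℝ) (hδpos : 0 < δn) (hδε : δn < εn) (hη : 0 < ηn)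
    (A : ℕ → Set F) (hAmeas : ∀ j, MeasurableSet (A j))
    (hAsub : ∀ j, A j ⊆ {f | εn < hellinger lam (ev f) f₀})
    (hAcover : {f | εn < hellinger lam (ev f) f₀} ⊆ ⋃ j, A j)
    (hAball : ∀ j, ∃ fc ∈ A j, ∀ f ∈ A j, hellinger lam (ev f) (ev fc) ≤ δn) :
    ν {ω | ENNReal.ofReal (Real.exp (-(n : ℝ) * ηn)) <
        ∑' j : ℕ, (∫⁻ f in A j,
          ENNReal.ofReal (∏ i ∈ Finset.range n, ev f (Xs i ω) / f₀ (Xs i ω)) ∂Pr)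
            ^ ((1 : ℝ)/2)}
      ≤ ENNReal.ofReal
          (Real.exp (-(n : ℝ) * (-Real.log (1 - (εn - δn) ^ 2 / 2) - ηn))) *
        ∑' j : ℕ, (Pr (A j)) ^ ((1 : ℝ)/2) :=
  stmt6_general lam ev hev hdens Pr f₀ hf₀ ν Xs hXmeas hindep hlaw n εn δn ηn hδε A hAmeas hAsub
    hAball
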